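/- In a diagnosis setting that is a weak model of failure, a component C ∈ 𝔠 is an actual cause if and only if C belongs to some minimal diagnosis. -/

import Mathlib

/-- A propositional formula, identified with the set of valuations satisfying it. -/
abbrev PropFormula (V : Type*) := (V → Bool) → Prop

/-- A set of formulas is consistent if some valuation satisfies all of them. -/
def Consistent {V : Type*} (T : Set (PropFormula V)) : Prop :=
  ∃ v : V → Bool, ∀ φ ∈ T, φ v

/-- A consistency-based diagnosis setting: a finite set of components, injective
abnormality variables, a model `M`, and an observation `Obs`. -/
structure DiagSetting (V α : Type*) where
  comps : Finset α
  ab : α → V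
  ab_inj : Function.Injective ab
  M : Set (PropFormula V)
  Obs : Set (PropFormula V)

variable {V α : Type*} [DecidableEq α]

/-- `Th(Δ) = M ∪ Obs ∪ { ab C is true : C ∈ Δ } ∪ { ab C is false : C ∈ 𝔠 \ Δ }`. -/
def DiagSetting.Th (S : DiagSetting V α) (Δ : Finset α) : Set (PropFormula V) :=
  S.M ∪ S.Obs ∪ {φ | ∃ C ∈ Δ, φ = fun v => v (S.ab C) = true}
    ∪ {φ | ∃ C ∈ S.comps \ Δ, φ = fun v => v (S.ab C) = false}

/-- `Δ` is a diagnosis if `Δ ⊆ 𝔠` and `Th(Δ)` is consistent. -/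
def DiagSetting.Diagnosis (S : DiagSetting V α) (Δ : Finset α) : Prop :=
  Δ ⊆ S.comps ∧ Consistent (S.Th Δ)

/-- A diagnosis is minimal if no proper subset of it is a diagnosis. -/
def DiagSetting.MinimalDiagnosis (S : DiagSetting V α) (Δ : Finset α) : Prop :=
  S.Diagnosis Δ ∧ ∀ Δ' ⊂ Δ, ¬ S.Diagnosis Δ'

/-- `C` is a counterfactual cause if `Th({C})` is consistent. -/
def DiagSetting.CounterfactualCause (S : DiagSetting V α) (C : α) : Prop :=
  C ∈ S.comps ∧ Consistent (S.Th {C})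

/-- `Γ ⊆ 𝔠 \ {C}` is a contingency set for `C ∈ 𝔠` if `Th(Γ)` is inconsistent
and `Th(Γ ∪ {C})` is consistent. -/
def DiagSetting.ContingencySet (S : DiagSetting V α) (C : α) (Γ : Finset α) : Prop :=
  C ∈ S.comps ∧ Γ ⊆ S.comps.erase C ∧ ¬ Consistent (S.Th Γ) ∧ Consistent (S.Th (insert C Γ))

/-- `C` is an actual cause if it has a contingency set. -/
def DiagSetting.ActualCause (S : DiagSetting V α) (C : α) : Prop :=
  ∃ Γ : Finset α, S.ContingencySet C Γ

/-- A contingency set for `C` is minimal if no proper subset is a contingency set for `C`. -/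
def DiagSetting.MinimalContingencySet (S : DiagSetting V α) (C : α) (Γ : Finset α) : Prop :=
  S.ContingencySet C Γ ∧ ∀ Γ' ⊂ Γ, ¬ S.ContingencySet C Γ'

/-- The truth value of `φ` does not depend on any abnormality variable `ab C'`, `C' ∈ 𝔠`. -/
def DiagSetting.IndepAb (S : DiagSetting V α) (φ : PropFormula V) : Prop :=
  ∀ v v' : V → Bool, (∀ x : V, (∀ C ∈ S.comps, S.ab C ≠ x) → v x = v' x) → (φ v ↔ φ v')

/-- A weak model of failure: every formula of `M` is semantically of the form
`(ab C is true) ∨ ψ` with `ψ` independent of the abnormality variables, and every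
formula of `Obs` is independent of the abnormality variables. -/
def DiagSetting.WeakModel (S : DiagSetting V α) : Prop :=
  (∀ φ ∈ S.M, ∃ C ∈ S.comps, ∃ ψ : PropFormula V,
      S.IndepAb ψ ∧ ∀ v, φ v ↔ (v (S.ab C) = true ∨ ψ v)) ∧
  (∀ φ ∈ S.Obs, S.IndepAb φ)

open Classical in
/-- Responsibility: `1/(1+|Γ|)` for a minimum-cardinality contingency set `Γ` for `C`
if `C` is an actual cause, and `0` otherwise. -/
noncomputable def DiagSetting.Resp (S : DiagSetting V α) (C : α) : ℚ :=
  if S.ActualCause C then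
    1 / (1 + ((sInf {n : ℕ | ∃ Γ : Finset α, S.ContingencySet C Γ ∧ Γ.card = n} : ℕ) : ℚ))
  else 0


/-!
Raising abnormality variables never falsifies a weak model of failure: each formula of `M` only
gets its disjunct `ab C` made true, and the other disjuncts and the observations ignore the
abnormality variables. Hence the diagnoses form an up-set. A contingency set `Γ` for `C` then
makes `Γ ∪ {C}` a diagnosis whose minimal sub-diagnoses must all contain `C`, since otherwise
`Γ` itself would be a diagnosis. Conversely, for a minimal diagnosis `Δ ∋ C` the set `Δ \ {C}`
is a contingency set for `C`.
-/

namespace DiagSetting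

variable {S : DiagSetting V α}

theorem WeakModel.consistent_th_mono (hW : S.WeakModel) {Δ Δ' : Finset α}
    (hΔΔ' : Δ ⊆ Δ') (hΔ' : Δ' ⊆ S.comps) (hΔ : Consistent (S.Th Δ)) :
    Consistent (S.Th Δ') := by
  classical
  obtain ⟨v, hv⟩ := hΔ
  let v' : V → Bool := fun x => v x || decide (∃ C ∈ Δ', S.ab C = x)
  have hle : ∀ x, v x = true → v' x = true := by simp_all [v']
  have hagree : ∀ x, (∀ C ∈ S.comps, S.ab C ≠ x) → v x = v' x := fun x hx => by
    have hx' : ¬∃ C ∈ Δ', S.ab C = x := fun ⟨C, hC, hCx⟩ => hx C (hΔ' hC) hCx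
    simp [v', hx']
  have hsat : ∀ φ ∈ S.M ∪ S.Obs, φ v → φ v' := by
    rintro φ (hφ | hφ) hφv
    · obtain ⟨C, -, ψ, hψ, hφψ⟩ := hW.1 φ hφ
      rw [hφψ] at hφv ⊢
      exact hφv.imp (hle _) (hψ v v' hagree).1
    · exact (hW.2 φ hφ v v' hagree).1 hφv
  refine ⟨v', ?_⟩
  rintro φ (((hφ | hφ) | ⟨C, hC, rfl⟩) | ⟨C, hC, rfl⟩)
  · exact hsat φ (.inl hφ) (hv φ (.inl (.inl (.inl hφ))))
  · exact hsat φ (.inr hφ) (hv φ (.inl (.inl (.inr hφ))))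
  · simpa [v'] using .inr ⟨C, hC, rfl⟩
  · obtain ⟨hCcomps, hCΔ'⟩ := Finset.mem_sdiff.mp hC
    have hvC : v (S.ab C) = false :=
      hv _ (.inr ⟨C, Finset.mem_sdiff.mpr ⟨hCcomps, fun h => hCΔ' (hΔΔ' h)⟩, rfl⟩)
    simpa [v', hvC, S.ab_inj.eq_iff] using hCΔ'

theorem exists_minimalDiagnosis_subset {Δ : Finset α} (hΔ : S.Diagnosis Δ) :
    ∃ Δ' ⊆ Δ, S.MinimalDiagnosis Δ' := by
  obtain ⟨Δ', ⟨hΔ'Δ, hΔ'⟩, hmin⟩ :=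
    wellFounded_lt.has_min {Δ' | Δ' ⊆ Δ ∧ S.Diagnosis Δ'} ⟨Δ, subset_rfl, hΔ⟩
  exact ⟨Δ', hΔ'Δ, hΔ', fun Δ'' hΔ'' hdiag =>
    hmin Δ'' ⟨hΔ''.subset.trans hΔ'Δ, hdiag⟩ hΔ''⟩

theorem ContingencySet.diagnosis_insert {C : α} {Γ : Finset α} (hΓ : S.ContingencySet C Γ) :
    S.Diagnosis (insert C Γ) :=
  ⟨Finset.insert_subset hΓ.1 (hΓ.2.1.trans (Finset.erase_subset _ _)), hΓ.2.2.2⟩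

theorem ContingencySet.mem_of_minimalDiagnosis_subset (hW : S.WeakModel) {C : α}
    {Γ Δ : Finset α} (hΓ : S.ContingencySet C Γ) (hΔ : S.MinimalDiagnosis Δ)
    (hΔΓ : Δ ⊆ insert C Γ) : C ∈ Δ := by
  by_contra hCΔ
  have hΓcomps : Γ ⊆ S.comps := (Finset.subset_insert C Γ).trans hΓ.diagnosis_insert.1
  exact hΓ.2.2.1 (hW.consistent_th_mono ((Finset.subset_insert_iff_of_notMem hCΔ).mp hΔΓ)
    hΓcomps hΔ.1.2)

theorem MinimalDiagnosis.contingencySet_erase {Δ : Finset α} (hΔ : S.MinimalDiagnosis Δ)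
    {C : α} (hCΔ : C ∈ Δ) : S.ContingencySet C (Δ.erase C) := by
  obtain ⟨⟨hΔcomps, hcons⟩, hmin⟩ := hΔ
  refine ⟨hΔcomps hCΔ, Finset.erase_subset_erase C hΔcomps, fun hcons' => ?_, ?_⟩
  · exact hmin _ (Finset.erase_ssubset hCΔ) ⟨(Finset.erase_subset C Δ).trans hΔcomps, hcons'⟩
  · rwa [Finset.insert_erase hCΔ]

end DiagSetting

theorem actualCause_iff_mem_minimalDiagnosis_general
    (S : DiagSetting V α) (hW : S.WeakModel) (C : α) :
    S.ActualCause C ↔ ∃ Δ : Finset α, S.MinimalDiagnosis Δ ∧ C ∈ Δ := by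
  constructor
  · rintro ⟨Γ, hΓ⟩
    obtain ⟨Δ, hΔΓ, hΔ⟩ := DiagSetting.exists_minimalDiagnosis_subset hΓ.diagnosis_insert
    exact ⟨Δ, hΔ, hΓ.mem_of_minimalDiagnosis_subset hW hΔ hΔΓ⟩
  · rintro ⟨Δ, hΔ, hCΔ⟩
    exact ⟨Δ.erase C, hΔ.contingencySet_erase hCΔ⟩

/-- In a weak model of failure, `C ∈ 𝔠` is an actual cause iff `C` belongs
to some minimal diagnosis. -/
theorem actualCause_iff_mem_minimalDiagnosis
    (S : DiagSetting V α) (hW : S.WeakModel) (C : α) (hC : C ∈ S.comps) :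
    S.ActualCause C ↔ ∃ Δ : Finset α, S.MinimalDiagnosis Δ ∧ C ∈ Δ :=
  actualCause_iff_mem_minimalDiagnosis_general S hW C
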